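/- arXiv:1204.0637 — 6 statements merged into one kernel-verified Lean document; each statement's English description precedes it below -/
import Mathlib

section
/- Let X be a real random variable with E[X] = 0, E[X^2] > 0 and E[X^4] < ∞. Then E[X^4]/(E[X^2])^2 - (E[X^3])^2/(E[X^2])^3 ≥ 1 (Pearson's kurtosis-skewness inequality). -/
/-!
Pearson's inequality is the nonnegativity of `E[(X² - a X - E[X²])²]` for the best choice
`a = E[X³] / E[X²]` (the regression coefficient of `X²` on `X`): expanding the square with
`E[X] = 0` leaves `E[X⁴] - E[X³]² / E[X²] - E[X²]²`.
-/

open MeasureTheory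

theorem integral_sq_quadratic_eq {Ω : Type*} [MeasurableSpace Ω] (μ : Measure Ω)
    [IsProbabilityMeasure μ] {X : Ω → ℝ}
    (h1 : Integrable X μ) (h2 : Integrable (fun ω => X ω ^ 2) μ)
    (h3 : Integrable (fun ω => X ω ^ 3) μ) (h4 : Integrable (fun ω => X ω ^ 4) μ) (a b : ℝ) :
    ∫ ω, (X ω ^ 2 - a * X ω - b) ^ 2 ∂μ
      = ∫ ω, X ω ^ 4 ∂μ - 2 * a * ∫ ω, X ω ^ 3 ∂μ + (a ^ 2 - 2 * b) * ∫ ω, X ω ^ 2 ∂μ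
        + 2 * a * b * ∫ ω, X ω ∂μ + b ^ 2 := by
  have hexpand : (fun ω => (X ω ^ 2 - a * X ω - b) ^ 2) = fun ω =>
      X ω ^ 4 - 2 * a * X ω ^ 3 + (a ^ 2 - 2 * b) * X ω ^ 2 + 2 * a * b * X ω + b ^ 2 := by
    funext ω; ring
  rw [hexpand, integral_add, integral_add, integral_add, integral_sub, integral_const_mul,
    integral_const_mul, integral_const_mul, integral_const, probReal_univ, one_smul]
  all_goals fun_prop

theorem integral_pow_two_cube_add_sq_le_integral_pow_four_mul {Ω : Type*}
    [MeasurableSpace Ω] (μ : Measure Ω) [IsProbabilityMeasure μ] {X : Ω → ℝ}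
    (h1 : Integrable X μ) (h2 : Integrable (fun ω => X ω ^ 2) μ)
    (h3 : Integrable (fun ω => X ω ^ 3) μ) (h4 : Integrable (fun ω => X ω ^ 4) μ)
    (hmean : ∫ ω, X ω ∂μ = 0) (hvar : 0 < ∫ ω, X ω ^ 2 ∂μ) :
    (∫ ω, X ω ^ 2 ∂μ) ^ 3 + (∫ ω, X ω ^ 3 ∂μ) ^ 2 ≤ (∫ ω, X ω ^ 4 ∂μ) * ∫ ω, X ω ^ 2 ∂μ := by
  set m2 := ∫ ω, X ω ^ 2 ∂μ
  set m3 := ∫ ω, X ω ^ 3 ∂μ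
  set m4 := ∫ ω, X ω ^ 4 ∂μ
  have hnonneg : 0 ≤ ∫ ω, (X ω ^ 2 - m3 / m2 * X ω - m2) ^ 2 ∂μ :=
    integral_nonneg fun ω => sq_nonneg _
  have hexpand : m4 - 2 * (m3 / m2) * m3 + ((m3 / m2) ^ 2 - 2 * m2) * m2
      + 2 * (m3 / m2) * m2 * 0 + m2 ^ 2 = (m4 * m2 - m3 ^ 2 - m2 ^ 3) / m2 := by
    field_simp; ring
  rw [integral_sq_quadratic_eq μ h1 h2 h3 h4, hmean, hexpand, le_div_iff₀ hvar] at hnonneg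
  linarith

theorem one_le_div_sq_sub_sq_div_pow_three {m2 m3 m4 : ℝ} (hm2 : 0 < m2)
    (h : m2 ^ 3 + m3 ^ 2 ≤ m4 * m2) : 1 ≤ m4 / m2 ^ 2 - m3 ^ 2 / m2 ^ 3 := by
  rw [div_sub_div _ _ (by positivity) (by positivity), le_div_iff₀ (by positivity)]
  nlinarith

/-- Pearson's kurtosis-skewness inequality. -/
theorem pearson_inequality {Ω : Type*} [MeasurableSpace Ω] (μ : Measure Ω)
    [IsProbabilityMeasure μ] (X : Ω → ℝ)
    (h1 : Integrable X μ) (h2 : Integrable (fun ω => X ω ^ 2) μ)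
    (h3 : Integrable (fun ω => X ω ^ 3) μ) (h4 : Integrable (fun ω => X ω ^ 4) μ)
    (hmean : ∫ ω, X ω ∂μ = 0) (hvar : 0 < ∫ ω, X ω ^ 2 ∂μ) :
    1 ≤ (∫ ω, X ω ^ 4 ∂μ) / (∫ ω, X ω ^ 2 ∂μ) ^ 2
      - (∫ ω, X ω ^ 3 ∂μ) ^ 2 / (∫ ω, X ω ^ 2 ∂μ) ^ 3 :=
  one_le_div_sq_sub_sq_div_pow_three hvar
    (integral_pow_two_cube_add_sq_le_integral_pow_four_mul μ h1 h2 h3 h4 hmean hvar)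
end

section
/- Let X be a real random variable with E[X] = 0, E[X^2] > 0, E[X^4] < ∞, whose support consists of exactly two points (a Bernoulli variable). Then E[X^4]/(E[X^2])^2 - (E[X^3])^2/(E[X^2])^3 = 1, i.e., equality holds in Pearson's inequality. -/
open MeasureTheory

/-! A random variable supported on `{a, b}` is a root of `(x - a) (x - b)`, so its moments obey
the linear recursion `m (n + 2) = (a + b) m (n + 1) - a b m n`. With `m 0 = 1` and `m 1 = 0` this
gives `m 2 = -a b`, `m 3 = (a + b) m 2` and `m 4 = ((a + b) ^ 2 + m 2) m 2`, and the two terms of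
Pearson's quantity differ by exactly `1`. -/

section TwoPoint

variable {Ω : Type*} [MeasurableSpace Ω] {μ : Measure Ω} {X : Ω → ℝ} {a b : ℝ}

theorem pow_add_two_eq_of_eq_or_eq {x : ℝ} (hx : x = a ∨ x = b) (n : ℕ) :
    x ^ (n + 2) = (a + b) * x ^ (n + 1) - a * b * x ^ n := by
  rcases hx with rfl | rfl <;> ring

theorem integral_pow_add_two_of_ae_eq_or_eq (hX : ∀ᵐ ω ∂μ, X ω = a ∨ X ω = b) (n : ℕ)
    (hn : Integrable (fun ω => X ω ^ n) μ) (hn₁ : Integrable (fun ω => X ω ^ (n + 1)) μ) :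
    ∫ ω, X ω ^ (n + 2) ∂μ
      = (a + b) * ∫ ω, X ω ^ (n + 1) ∂μ - a * b * ∫ ω, X ω ^ n ∂μ := by
  have hrec : ∀ᵐ ω ∂μ, X ω ^ (n + 2) = (a + b) * X ω ^ (n + 1) - a * b * X ω ^ n := by
    filter_upwards [hX] with ω hω using pow_add_two_eq_of_eq_or_eq hω n
  rw [integral_congr_ae hrec, integral_sub (hn₁.const_mul _) (hn.const_mul _),
    integral_const_mul, integral_const_mul]

end TwoPoint

theorem pearson_eq_of_bernoulli_general {Ω : Type*} [MeasurableSpace Ω] (μ : Measure Ω)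
    [IsProbabilityMeasure μ] (X : Ω → ℝ)
    (h1 : Integrable X μ) (h2 : Integrable (fun ω => X ω ^ 2) μ)
    (h3 : Integrable (fun ω => X ω ^ 3) μ)
    (hmean : ∫ ω, X ω ∂μ = 0) (hvar : 0 < ∫ ω, X ω ^ 2 ∂μ)
    (hbern : ∃ a b : ℝ, a ≠ b ∧ μ {ω | X ω = a} ≠ 0 ∧ μ {ω | X ω = b} ≠ 0 ∧
      ∀ᵐ ω ∂μ, X ω = a ∨ X ω = b) :
    (∫ ω, X ω ^ 4 ∂μ) / (∫ ω, X ω ^ 2 ∂μ) ^ 2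
      - (∫ ω, X ω ^ 3 ∂μ) ^ 2 / (∫ ω, X ω ^ 2 ∂μ) ^ 3 = 1 := by
  obtain ⟨a, b, -, -, -, hX⟩ := hbern
  have m2 := integral_pow_add_two_of_ae_eq_or_eq hX 0 (by simp) (by simpa using h1)
  have m3 := integral_pow_add_two_of_ae_eq_or_eq hX 1 (by simpa using h1) h2
  have m4 := integral_pow_add_two_of_ae_eq_or_eq hX 2 h2 h3
  simp only [zero_add, pow_one, pow_zero, integral_const, probReal_univ, smul_eq_mul, mul_one,
    hmean, mul_zero, sub_zero, zero_sub] at m2 m3 m4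
  have hm2 : ∫ ω, X ω ^ 2 ∂μ ≠ 0 := hvar.ne'
  rw [m4, m3, show a * b = -∫ ω, X ω ^ 2 ∂μ by linarith]
  field_simp
  ring

/-- Equality in Pearson's inequality for a Bernoulli (two-point) random variable. -/
theorem pearson_eq_of_bernoulli {Ω : Type*} [MeasurableSpace Ω] (μ : Measure Ω)
    [IsProbabilityMeasure μ] (X : Ω → ℝ)
    (h1 : Integrable X μ) (h2 : Integrable (fun ω => X ω ^ 2) μ)
    (h3 : Integrable (fun ω => X ω ^ 3) μ) (h4 : Integrable (fun ω => X ω ^ 4) μ)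
    (hmean : ∫ ω, X ω ∂μ = 0) (hvar : 0 < ∫ ω, X ω ^ 2 ∂μ)
    (hbern : ∃ a b : ℝ, a ≠ b ∧ μ {ω | X ω = a} ≠ 0 ∧ μ {ω | X ω = b} ≠ 0 ∧
      ∀ᵐ ω ∂μ, X ω = a ∨ X ω = b) :
    (∫ ω, X ω ^ 4 ∂μ) / (∫ ω, X ω ^ 2 ∂μ) ^ 2
      - (∫ ω, X ω ^ 3 ∂μ) ^ 2 / (∫ ω, X ω ^ 2 ∂μ) ^ 3 = 1 :=
  pearson_eq_of_bernoulli_general μ X h1 h2 h3 hmean hvar hbern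
end

section
/- If equality holds in Pearson's inequality, i.e., E[X^4]/(E[X^2])^2 - (E[X^3])^2/(E[X^2])^3 = 1 for a random variable X with E[X]=0, E[X^2]>0, E[X^4]<∞, then X is supported on exactly two points. -/
/-!
Put `m₂ = E[X²]`, `m₃ = E[X³]`, `m₄ = E[X⁴]`. Since `E[X] = 0`, the residual `X² - (m₃/m₂) X - m₂`
of the regression of `X²` on `1, X` has second moment `m₄ - m₃²/m₂ - m₂²`, which is `m₂²` times
kurtosis minus squared skewness minus one. Equality in Pearson's inequality thus makes the
residual vanish almost surely: `X` is a.s. a root of `t² - (m₃/m₂) t - m₂`. Its two roots have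
product `-m₂ < 0`, so they are distinct and nonzero, and neither can be a null atom, since then
`X` would be a.s. equal to the other one, which contradicts `E[X] = 0`.
-/

open MeasureTheory

lemma sq_sq_sub_mul_sub (x c d : ℝ) :
    (x ^ 2 - c * x - d) ^ 2
      = x ^ 4 - 2 * c * x ^ 3 + (c ^ 2 - 2 * d) * x ^ 2 + 2 * c * d * x + d ^ 2 := by
  ring

section Moments

variable {Ω : Type*} [MeasurableSpace Ω] {μ : Measure Ω} [IsProbabilityMeasure μ] {X : Ω → ℝ}
  (h1 : Integrable X μ) (h2 : Integrable (fun ω => X ω ^ 2) μ)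
  (h3 : Integrable (fun ω => X ω ^ 3) μ) (h4 : Integrable (fun ω => X ω ^ 4) μ)

include h1 h2 h3 h4

lemma integrable_sq_sq_sub_mul_sub (c d : ℝ) :
    Integrable (fun ω => (X ω ^ 2 - c * X ω - d) ^ 2) μ := by
  simp_rw [sq_sq_sub_mul_sub]
  fun_prop

lemma integral_sq_sq_sub_mul_sub (c d : ℝ) :
    ∫ ω, (X ω ^ 2 - c * X ω - d) ^ 2 ∂μ = ∫ ω, X ω ^ 4 ∂μ - 2 * c * ∫ ω, X ω ^ 3 ∂μ
      + (c ^ 2 - 2 * d) * ∫ ω, X ω ^ 2 ∂μ + 2 * c * d * ∫ ω, X ω ∂μ + d ^ 2 := by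
  simp_rw [sq_sq_sub_mul_sub]
  rw [integral_add (by fun_prop) (by fun_prop), integral_add (by fun_prop) (by fun_prop),
    integral_add (by fun_prop) (by fun_prop), integral_sub (by fun_prop) (by fun_prop)]
  simp [integral_const_mul]

lemma integral_sq_pearson_residual (hmean : ∫ ω, X ω ∂μ = 0) (hvar : ∫ ω, X ω ^ 2 ∂μ ≠ 0) :
    ∫ ω, (X ω ^ 2 - (∫ ω, X ω ^ 3 ∂μ) / (∫ ω, X ω ^ 2 ∂μ) * X ω - ∫ ω, X ω ^ 2 ∂μ) ^ 2 ∂μ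
      = ∫ ω, X ω ^ 4 ∂μ - (∫ ω, X ω ^ 3 ∂μ) ^ 2 / ∫ ω, X ω ^ 2 ∂μ
        - (∫ ω, X ω ^ 2 ∂μ) ^ 2 := by
  rw [integral_sq_sq_sub_mul_sub h1 h2 h3 h4, hmean]
  field_simp
  ring

end Moments

lemma exists_factorization_sq_sub_mul_sub {m : ℝ} (hm : 0 < m) (c : ℝ) :
    ∃ a b : ℝ, a * b = -m ∧ ∀ t : ℝ, t ^ 2 - c * t - m = (t - a) * (t - b) := by
  have hdisc : 0 ≤ c ^ 2 + 4 * m := by positivity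
  have hsqrt := Real.sq_sqrt hdisc
  refine ⟨(c + √(c ^ 2 + 4 * m)) / 2, (c - √(c ^ 2 + 4 * m)) / 2, ?_, fun t => ?_⟩
  · linear_combination (-1 / 4 : ℝ) * hsqrt
  · linear_combination (1 / 4 : ℝ) * hsqrt

lemma ae_eq_of_ae_eq_or_of_measure_setOf_eq_zero {α β : Type*} [MeasurableSpace α]
    {μ : Measure α} {f : α → β} {a b : β} (hf : ∀ᵐ x ∂μ, f x = a ∨ f x = b)
    (ha : μ {x | f x = a} = 0) :
    ∀ᵐ x ∂μ, f x = b := by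
  have hne : ∀ᵐ x ∂μ, f x ≠ a := by
    rw [ae_iff]
    simpa using ha
  filter_upwards [hf, hne] with x hx hxa
  exact hx.resolve_left hxa

lemma measure_setOf_eq_ne_zero_of_ae_eq_or_of_integral_eq_zero {Ω : Type*} [MeasurableSpace Ω]
    {μ : Measure Ω} [IsProbabilityMeasure μ] {X : Ω → ℝ} {a b : ℝ} (hb : b ≠ 0)
    (hX : ∀ᵐ ω ∂μ, X ω = a ∨ X ω = b) (hmean : ∫ ω, X ω ∂μ = 0) :
    μ {ω | X ω = a} ≠ 0 := by
  intro ha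
  have hXb : ∫ ω, X ω ∂μ = b := by
    rw [integral_congr_ae (ae_eq_of_ae_eq_or_of_measure_setOf_eq_zero hX ha)]
    simp
  exact hb (hXb.symm.trans hmean)

/-- Equality in Pearson's inequality forces a two-point support. -/
theorem bernoulli_of_pearson_eq {Ω : Type*} [MeasurableSpace Ω] (μ : Measure Ω)
    [IsProbabilityMeasure μ] (X : Ω → ℝ)
    (h1 : Integrable X μ) (h2 : Integrable (fun ω => X ω ^ 2) μ)
    (h3 : Integrable (fun ω => X ω ^ 3) μ) (h4 : Integrable (fun ω => X ω ^ 4) μ)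
    (hmean : ∫ ω, X ω ∂μ = 0) (hvar : 0 < ∫ ω, X ω ^ 2 ∂μ)
    (heq : (∫ ω, X ω ^ 4 ∂μ) / (∫ ω, X ω ^ 2 ∂μ) ^ 2
      - (∫ ω, X ω ^ 3 ∂μ) ^ 2 / (∫ ω, X ω ^ 2 ∂μ) ^ 3 = 1) :
    ∃ a b : ℝ, a ≠ b ∧ μ {ω | X ω = a} ≠ 0 ∧ μ {ω | X ω = b} ≠ 0 ∧
      ∀ᵐ ω ∂μ, X ω = a ∨ X ω = b := by
  set m₂ := ∫ ω, X ω ^ 2 ∂μ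
  set m₃ := ∫ ω, X ω ^ 3 ∂μ
  set c := m₃ / m₂
  have hdefect : ∫ ω, X ω ^ 4 ∂μ - m₃ ^ 2 / m₂ - m₂ ^ 2 = 0 := by
    field_simp at heq ⊢
    linear_combination heq
  have hresidual : ∫ ω, (X ω ^ 2 - c * X ω - m₂) ^ 2 ∂μ = 0 :=
    (integral_sq_pearson_residual h1 h2 h3 h4 hmean hvar.ne').trans hdefect
  have hroot : ∀ᵐ ω ∂μ, X ω ^ 2 - c * X ω - m₂ = 0 := by
    filter_upwards [(integral_eq_zero_iff_of_nonneg (fun ω => sq_nonneg _)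
      (integrable_sq_sq_sub_mul_sub h1 h2 h3 h4 c m₂)).mp hresidual] with ω hω
    exact pow_eq_zero_iff two_ne_zero |>.mp hω
  obtain ⟨a, b, hab, hfactor⟩ := exists_factorization_sq_sub_mul_sub hvar c
  have hX : ∀ᵐ ω ∂μ, X ω = a ∨ X ω = b := by
    filter_upwards [hroot] with ω hω
    rw [hfactor, mul_eq_zero, sub_eq_zero, sub_eq_zero] at hω
    exact hω
  have ha : a ≠ 0 := by rintro rfl; linarith
  have hb : b ≠ 0 := by rintro rfl; linarith
  have hne : a ≠ b := by rintro rfl; nlinarith [sq_nonneg a]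
  exact ⟨a, b, hne, measure_setOf_eq_ne_zero_of_ae_eq_or_of_integral_eq_zero hb hX hmean,
    measure_setOf_eq_ne_zero_of_ae_eq_or_of_integral_eq_zero ha (hX.mono fun _ => Or.symm) hmean,
    hX⟩
end

section
/- Let β ∈ [0,2) and α ∈ (0,1]. For any real random variable X with E[X]=0, E[X^2]>0 and E[X^4]<∞, the strict inequality (E[|X|^β])^{2/(2-β)}/(E[X^2])^{β/(2-β)} · { E[X^4]/(E[X^2])^2 - α·(E[X^3])^2/(E[X^2])^3 } > 1 - α holds. -/
/-!
Lyapunov's inequality (log-convexity of `r ↦ E|X|^r`, i.e. Hölder) at the exponents `β < 2 < 4`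
says that the prefactor is at least `(E X²)² / E X⁴`. Since `E X = 0`, the discriminant of the
nonnegative quadratic `t ↦ E[(X² - E X² - t X)²]` gives Pearson's bound
`(E X³)² ≤ E X² (E X⁴ - (E X²)²) < E X² · E X⁴`. Hence the product is at least
`1 - α (E X³)² / (E X² · E X⁴) > 1 - α`.
-/

open MeasureTheory

section Moments

variable {Ω : Type*} [MeasurableSpace Ω] {μ : Measure Ω} {X : Ω → ℝ}

theorem memLp_abs_rpow_div {r p : ℝ} (hp : 0 < p) (h : Integrable (fun ω => |X ω| ^ r) μ) :
    MemLp (fun ω => |X ω| ^ (r / p)) (ENNReal.ofReal p) μ := by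
  have h := (memLp_one_iff_integrable.mpr h).norm_rpow_div (ENNReal.ofReal p)⁻¹
  rw [one_div, inv_inv, ENNReal.toReal_inv, ENNReal.toReal_ofReal hp.le] at h
  have hfun : (fun ω => ‖|X ω| ^ r‖ ^ p⁻¹) = fun ω => |X ω| ^ (r / p) := by
    funext ω
    rw [Real.norm_eq_abs, abs_of_nonneg (by positivity), ← Real.rpow_mul (abs_nonneg _),
      div_eq_mul_inv]
  rwa [hfun] at h

theorem integral_abs_rpow_le_rpow_mul_rpow {a b c : ℝ} (hab : a < b) (hbc : b < c) (hb : b ≠ 0)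
    (ha_int : Integrable (fun ω => |X ω| ^ a) μ) (hc_int : Integrable (fun ω => |X ω| ^ c) μ) :
    ∫ ω, |X ω| ^ b ∂μ ≤
      (∫ ω, |X ω| ^ a ∂μ) ^ ((c - b) / (c - a)) * (∫ ω, |X ω| ^ c ∂μ) ^ ((b - a) / (c - a)) := by
  set p := (c - a) / (c - b)
  set q := (c - a) / (b - a)
  have hca : c - a ≠ 0 := by linarith
  have hp : 0 < p := div_pos (by linarith) (by linarith)
  have hq : 0 < q := div_pos (by linarith) (by linarith)
  have hpq : p.HolderConjugate q := by
    refine Real.holderConjugate_iff.mpr ⟨(one_lt_div (by linarith)).mpr (by linarith), ?_⟩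
    simp only [p, q, inv_div]
    field_simp
    ring
  have hsplit : a / p + c / q = b := by
    simp only [p, q]
    field_simp
    ring
  have holder := integral_mul_le_Lp_mul_Lq_of_nonneg hpq
    (.of_forall fun ω => Real.rpow_nonneg (abs_nonneg (X ω)) (a / p))
    (.of_forall fun ω => Real.rpow_nonneg (abs_nonneg (X ω)) (c / q))
    (memLp_abs_rpow_div hp ha_int) (memLp_abs_rpow_div hq hc_int)
  simp only [← Real.rpow_add' (abs_nonneg _) (hsplit ▸ hb), hsplit,
    ← Real.rpow_mul (abs_nonneg _), div_mul_cancel₀ _ hp.ne', div_mul_cancel₀ _ hq.ne'] at holder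
  simpa only [p, q, one_div, inv_div] using holder

theorem sq_integral_pow_three_le [IsProbabilityMeasure μ] (h1 : Integrable X μ)
    (h2 : Integrable (fun ω => X ω ^ 2) μ) (h3 : Integrable (fun ω => X ω ^ 3) μ)
    (h4 : Integrable (fun ω => X ω ^ 4) μ) (hmean : ∫ ω, X ω ∂μ = 0) :
    (∫ ω, X ω ^ 3 ∂μ) ^ 2 ≤ (∫ ω, X ω ^ 2 ∂μ) * (∫ ω, X ω ^ 4 ∂μ - (∫ ω, X ω ^ 2 ∂μ) ^ 2) := by
  set B := ∫ ω, X ω ^ 2 ∂μ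
  set C := ∫ ω, X ω ^ 3 ∂μ
  set D := ∫ ω, X ω ^ 4 ∂μ
  have quadratic_nonneg (t : ℝ) : 0 ≤ B * (t * t) + -2 * C * t + (D - B ^ 2) := by
    have expand : ∫ ω, (X ω ^ 2 - B - t * X ω) ^ 2 ∂μ
        = B * (t * t) + -2 * C * t + (D - B ^ 2) := by
      have hpoly : (fun ω => (X ω ^ 2 - B - t * X ω) ^ 2) = fun ω =>
          X ω ^ 4 + -2 * t * X ω ^ 3 + (t ^ 2 - 2 * B) * X ω ^ 2 + 2 * t * B * X ω + B ^ 2 := by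
        funext ω; ring
      rw [hpoly, integral_add (by fun_prop) (integrable_const _),
        integral_add (by fun_prop) (by fun_prop), integral_add (by fun_prop) (by fun_prop),
        integral_add h4 (by fun_prop)]
      simp only [integral_const_mul, integral_const, hmean, mul_zero, add_zero, probReal_univ,
        smul_eq_mul, one_mul]
      ring
    exact expand ▸ integral_nonneg fun ω => sq_nonneg _
  have := discrim_le_zero quadratic_nonneg
  rw [discrim] at this
  linear_combination this / 4

end Moments

theorem sq_div_le_rpow_div_rpow_of_le {A B D β : ℝ} (hβ : β < 2) (hA : 0 ≤ A) (hB : 0 < B)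
    (hD : 0 < D) (h : B ≤ A ^ (2 / (4 - β)) * D ^ ((2 - β) / (4 - β))) :
    B ^ 2 / D ≤ A ^ (2 / (2 - β)) / B ^ (β / (2 - β)) := by
  have h2β : 2 - β ≠ 0 := by linarith
  have h4β : 4 - β ≠ 0 := by linarith
  have hpow := Real.rpow_le_rpow hB.le h (by bound : 0 ≤ (4 - β) / (2 - β))
  have hA_exp : 2 / (4 - β) * ((4 - β) / (2 - β)) = 2 / (2 - β) := by field_simp
  have hD_exp : (2 - β) / (4 - β) * ((4 - β) / (2 - β)) = 1 := by field_simp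
  have hB_pow : B ^ ((4 - β) / (2 - β)) = B ^ 2 * B ^ (β / (2 - β)) := by
    rw [← Real.rpow_two, ← Real.rpow_add hB]
    congr 1
    field_simp
    ring
  rw [Real.mul_rpow (by positivity) (by positivity), ← Real.rpow_mul hA, ← Real.rpow_mul hD.le,
    hA_exp, hD_exp, Real.rpow_one, hB_pow] at hpow
  rwa [div_le_div_iff₀ hD (by positivity)]

theorem one_sub_lt_mul_sub {α B C D K : ℝ} (hα0 : 0 < α) (hα1 : α ≤ 1) (hB : 0 < B)
    (hC : C ^ 2 ≤ B * (D - B ^ 2)) (hK : B ^ 2 / D ≤ K) :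
    1 - α < K * (D / B ^ 2 - α * C ^ 2 / B ^ 3) := by
  have hCD : C ^ 2 < B * D := by nlinarith [pow_pos hB 3]
  have hD : 0 < D := by nlinarith [sq_nonneg C]
  have hfactor : 0 ≤ D / B ^ 2 - α * C ^ 2 / B ^ 3 := by
    have hαC : α * C ^ 2 ≤ B * D := by nlinarith [sq_nonneg C]
    rw [sub_nonneg, div_le_div_iff₀ (by positivity) (by positivity)]
    nlinarith [mul_le_mul_of_nonneg_right hαC (sq_nonneg B)]
  calc 1 - α < 1 - α * (C ^ 2 / (B * D)) := by
        have := (div_lt_one (mul_pos hB hD)).mpr hCD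
        nlinarith
    _ = B ^ 2 / D * (D / B ^ 2 - α * C ^ 2 / B ^ 3) := by field_simp
    _ ≤ K * (D / B ^ 2 - α * C ^ 2 / B ^ 3) := mul_le_mul_of_nonneg_right hK hfactor

theorem kurtosis_skewness_strict {Ω : Type*} [MeasurableSpace Ω] (μ : Measure Ω)
    [IsProbabilityMeasure μ] (X : Ω → ℝ) (α β : ℝ)
    (hβ : β ∈ Set.Ico (0:ℝ) 2) (hα : α ∈ Set.Ioc (0:ℝ) 1)
    (h1 : Integrable X μ) (h2 : Integrable (fun ω => X ω ^ 2) μ)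
    (h3 : Integrable (fun ω => X ω ^ 3) μ) (h4 : Integrable (fun ω => X ω ^ 4) μ)
    (hβint : Integrable (fun ω => |X ω| ^ β) μ)
    (hmean : ∫ ω, X ω ∂μ = 0) (hvar : 0 < ∫ ω, X ω ^ 2 ∂μ) :
    1 - α < (∫ ω, |X ω| ^ β ∂μ) ^ (2 / (2 - β)) / (∫ ω, X ω ^ 2 ∂μ) ^ (β / (2 - β))
      * ((∫ ω, X ω ^ 4 ∂μ) / (∫ ω, X ω ^ 2 ∂μ) ^ 2
        - α * (∫ ω, X ω ^ 3 ∂μ) ^ 2 / (∫ ω, X ω ^ 2 ∂μ) ^ 3) := by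
  have habs_two : (fun ω => |X ω| ^ (2 : ℝ)) = fun ω => X ω ^ 2 := by
    funext ω; rw [Real.rpow_two, sq_abs]
  have habs_four : (fun ω => |X ω| ^ (4 : ℝ)) = fun ω => X ω ^ 4 := by
    funext ω; norm_num [Even.pow_abs]
  have hpearson := sq_integral_pow_three_le h1 h2 h3 h4 hmean
  have hlyapunov := integral_abs_rpow_le_rpow_mul_rpow hβ.2 (by norm_num) two_ne_zero hβint
    (habs_four ▸ h4)
  rw [habs_two, habs_four, show ((4 : ℝ) - 2) = 2 by norm_num] at hlyapunov
  have hD : 0 < ∫ ω, X ω ^ 4 ∂μ := by nlinarith [(sq_nonneg _).trans hpearson, pow_pos hvar 3]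
  exact one_sub_lt_mul_sub hα.1 hα.2 hvar hpearson <|
    sq_div_le_rpow_div_rpow_of_le hβ.2 (integral_nonneg fun ω => by positivity) hvar hD hlyapunov
end

section
/- Let β ∈ [0,1) and define g(x) = cosh((β-1)x)·cosh(x)^{1-β}. Then g attains its global minimum at x = 0, i.e., g(x) ≥ g(0) = 1 for all x ∈ ℝ. Conversely, if β ∈ (1,2), then g attains its global maximum at x = 0, i.e., g(x) ≤ 1 for all x ∈ ℝ. -/
/-!
For `0 ≤ t ≤ 1`, `cosh (t x)` is the mean of `(eˣ)ᵗ` and `(e⁻ˣ)ᵗ`, so concavity of `y ↦ yᵗ`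
bounds it by `cosh x ^ t`. Taking `t = β - 1` for `β ∈ (1, 2)` gives
`cosh ((β - 1) x) * cosh x ^ (1 - β) ≤ cosh x ^ t * cosh x ^ (-t) = 1`.
For `β ≤ 1` both factors are at least `1`.
-/

open Real

lemma Real.cosh_mul_le_cosh_rpow {t : ℝ} (ht₀ : 0 ≤ t) (ht₁ : t ≤ 1) (x : ℝ) :
    cosh (t * x) ≤ cosh x ^ t := by
  have h := (concaveOn_rpow ht₀ ht₁).2 (exp_pos x).le (exp_pos (-x)).le
    (by norm_num : (0 : ℝ) ≤ 1 / 2) (by norm_num : (0 : ℝ) ≤ 1 / 2) (by norm_num)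
  simp only [smul_eq_mul, ← exp_mul] at h
  calc cosh (t * x) = 1 / 2 * exp (x * t) + 1 / 2 * exp (-x * t) := by rw [cosh_eq]; ring_nf
    _ ≤ (1 / 2 * exp x + 1 / 2 * exp (-x)) ^ t := h
    _ = cosh x ^ t := by rw [cosh_eq]; ring_nf

theorem g_extremum (β : ℝ) :
    (fun x : ℝ => Real.cosh ((β - 1) * x) * Real.cosh x ^ (1 - β)) 0 = 1 ∧
    (β ∈ Set.Ico (0:ℝ) 1 →
      ∀ x : ℝ, 1 ≤ Real.cosh ((β - 1) * x) * Real.cosh x ^ (1 - β)) ∧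
    (β ∈ Set.Ioo (1:ℝ) 2 →
      ∀ x : ℝ, Real.cosh ((β - 1) * x) * Real.cosh x ^ (1 - β) ≤ 1) := by
  refine ⟨by simp, ?_, ?_⟩
  · rintro ⟨-, hβ₁⟩ x
    exact one_le_mul_of_one_le_of_one_le (one_le_cosh _)
      (one_le_rpow (one_le_cosh x) (by linarith))
  · rintro ⟨hβ₁, hβ₂⟩ x
    calc cosh ((β - 1) * x) * cosh x ^ (1 - β)
        ≤ cosh x ^ (β - 1) * cosh x ^ (1 - β) := by
          gcongr
          exact cosh_mul_le_cosh_rpow (by linarith) (by linarith) x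
      _ = 1 := by rw [← rpow_add (cosh_pos x)]; simp
end

section
/- Let β ∈ [0,1) and let X be a two-point random variable with E[X]=0, E[X^2]>0, E[X^4]<∞ such that equality holds in the inequality E[X^4]/(E[X^2])^2 - (3/4)(E[X^3])^2/(E[X^2])^3 = (E[X^2])^{β/(2-β)}/(E[|X|^β])^{2/(2-β)}. Then E[X^3] = 0, i.e., X is symmetrically Bernoulli. -/
/-!
A centred two-point law with atoms `a > 0` and `-c < 0` has weights `c / (a + c)` and
`a / (a + c)`, second moment `a c`, and the left-hand side of the equation equals
`r = (a + c)² / (4 a c) ≥ 1`. Bounding `E|X|^β` from below by AM-GM on `c a^β` and `a c^β`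
shows that the right-hand side is at most `r ^ (1 / (2 - β))`. As `1 / (2 - β) < 1`, equality
forces `r = 1`, i.e. `a = c`, and then the third moment vanishes.
-/

open MeasureTheory Real

theorem integral_comp_of_ae_eq_or_eq {Ω α E : Type*} [MeasurableSpace Ω] [MeasurableSpace α]
    [MeasurableSingletonClass α] [NormedAddCommGroup E] [NormedSpace ℝ E] [CompleteSpace E]
    {μ : Measure Ω} [IsFiniteMeasure μ] {X : Ω → α} (hX : AEMeasurable X μ) {a b : α}
    (hab : a ≠ b) (hae : ∀ᵐ ω ∂μ, X ω = a ∨ X ω = b) (g : α → E) :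
    ∫ ω, g (X ω) ∂μ = μ.real {ω | X ω = a} • g a + μ.real {ω | X ω = b} • g b := by
  have hA : NullMeasurableSet {ω | X ω = a} μ :=
    hX.nullMeasurableSet_preimage (measurableSet_singleton a)
  have hB : NullMeasurableSet {ω | X ω = b} μ :=
    hX.nullMeasurableSet_preimage (measurableSet_singleton b)
  have hsplit : (fun ω => g (X ω)) =ᵐ[μ]
      {ω | X ω = a}.indicator (fun _ => g a) + {ω | X ω = b}.indicator (fun _ => g b) := by
    filter_upwards [hae] with ω hω
    rcases hω with h | h <;> simp [h, hab, hab.symm]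
  rw [integral_congr_ae hsplit, integral_add' ((integrable_const _).indicator₀ hA)
    ((integrable_const _).indicator₀ hB), integral_indicator₀ hA, integral_indicator₀ hB,
    setIntegral_const, setIntegral_const]

theorem eq_one_of_le_rpow_of_lt_one {r e : ℝ} (hr : 1 ≤ r) (he : e < 1) (h : r ≤ r ^ e) :
    r = 1 := by
  by_contra hne
  have : r ^ e < r ^ (1 : ℝ) := rpow_lt_rpow_of_exponent_lt (hr.lt_of_ne' hne) he
  rw [rpow_one] at this
  linarith

theorem rpow_mul_div_rpow_mul_le {u M R β e : ℝ} (hu : 0 < u) (hM : 0 < M) (he : 0 ≤ e)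
    (h : u ^ β ≤ R * M ^ 2) : u ^ (β * e) / M ^ (2 * e) ≤ R ^ e := by
  rw [rpow_mul hu.le, rpow_mul hM.le, rpow_two, ← div_rpow (by positivity) (by positivity)]
  exact rpow_le_rpow (by positivity) ((div_le_iff₀ (by positivity)).2 h) he

theorem four_mul_mul_rpow_le_sq {x y : ℝ} (hx : 0 < x) (hy : 0 < y) (β : ℝ) :
    4 * (x * y) * (x * y) ^ β ≤ (y * x ^ β + x * y ^ β) ^ 2 := by
  calc 4 * (x * y) * (x * y) ^ β = 4 * (y * x ^ β) * (x * y ^ β) := by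
        rw [mul_rpow hx.le hy.le]; ring
    _ ≤ _ := four_mul_le_sq_add _ _

theorem eq_of_sq_add_div_eq_rpow {x y β : ℝ} (hx : 0 < x) (hy : 0 < y) (hβ : β < 1)
    (heq : (x + y) ^ 2 / (4 * (x * y)) =
      (x * y) ^ (β / (2 - β)) / ((y * x ^ β + x * y ^ β) / (x + y)) ^ (2 / (2 - β))) :
    x = y := by
  set r := (x + y) ^ 2 / (4 * (x * y))
  have hr : 1 ≤ r := by
    rw [one_le_div (by positivity)]; nlinarith [sq_nonneg (x - y)]
  have hle : (x * y) ^ (β / (2 - β)) / ((y * x ^ β + x * y ^ β) / (x + y)) ^ (2 / (2 - β))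
      ≤ r ^ (1 / (2 - β)) := by
    rw [div_eq_mul_one_div β, div_eq_mul_one_div 2]
    refine rpow_mul_div_rpow_mul_le (by positivity) (by positivity)
      (one_div_nonneg.2 (by linarith)) ?_
    calc (x * y) ^ β = 4 * (x * y) * (x * y) ^ β / (4 * (x * y)) := by field_simp
      _ ≤ (y * x ^ β + x * y ^ β) ^ 2 / (4 * (x * y)) := by
        gcongr; exact four_mul_mul_rpow_le_sq hx hy β
      _ = r * ((y * x ^ β + x * y ^ β) / (x + y)) ^ 2 := by simp only [r]; field_simp
  have hr1 : r = 1 :=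
    eq_one_of_le_rpow_of_lt_one hr ((div_lt_one (by linarith)).2 (by linarith)) (heq.trans_le hle)
  rw [div_eq_one_iff_eq (by positivity)] at hr1
  nlinarith [sq_nonneg (x - y)]

theorem two_point_third_moment_eq_zero {p q a b β : ℝ} (hp : 0 < p) (hq : 0 < q)
    (hpq : p + q = 1) (hab : a ≠ b) (hmean : p * a + q * b = 0) (hβ : β < 1)
    (heq : (p * a ^ 4 + q * b ^ 4) / (p * a ^ 2 + q * b ^ 2) ^ 2
      - (3 / 4) * (p * a ^ 3 + q * b ^ 3) ^ 2 / (p * a ^ 2 + q * b ^ 2) ^ 3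
      = (p * a ^ 2 + q * b ^ 2) ^ (β / (2 - β))
        / (p * |a| ^ β + q * |b| ^ β) ^ (2 / (2 - β))) :
    p * a ^ 3 + q * b ^ 3 = 0 := by
  wlog ha : 0 < a generalizing p q a b
  · have hb : 0 < b := by
      by_contra hb
      rcases hab.lt_or_gt with h | h <;> nlinarith
    have := this hq hp (by linarith) hab.symm (by linarith) (by simpa only [add_comm] using heq) hb
    linarith
  obtain ⟨c, rfl⟩ : ∃ c, b = -c := ⟨-b, by ring⟩
  have hc : 0 < c := by nlinarith
  have hac : 0 < a + c := by positivity
  have hp' : p = c / (a + c) := by field_simp; linear_combination c * hpq + hmean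
  have hq' : q = a / (a + c) := by field_simp; linear_combination a * hpq - hmean
  have hsecond : p * a ^ 2 + q * (-c) ^ 2 = a * c := by rw [hp', hq']; field_simp
  have hkurt : (p * a ^ 4 + q * (-c) ^ 4) / (a * c) ^ 2
      - (3 / 4) * (p * a ^ 3 + q * (-c) ^ 3) ^ 2 / (a * c) ^ 3
      = (a + c) ^ 2 / (4 * (a * c)) := by rw [hp', hq']; field_simp; ring
  have habs : p * |a| ^ β + q * |-c| ^ β = (c * a ^ β + a * c ^ β) / (a + c) := by
    rw [abs_of_pos ha, abs_neg, abs_of_pos hc, hp', hq']; field_simp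
  rw [hsecond, hkurt, habs] at heq
  obtain rfl := eq_of_sq_add_div_eq_rpow ha hc hβ heq
  linear_combination a ^ 2 * hmean

theorem symmetric_bernoulli_of_equality_general {Ω : Type*} [MeasurableSpace Ω] (μ : Measure Ω)
    [IsProbabilityMeasure μ] (X : Ω → ℝ) (β : ℝ) (hβ : β ∈ Set.Ico (0:ℝ) 1)
    (h1 : Integrable X μ) (hmean : ∫ ω, X ω ∂μ = 0)
    (hbern : ∃ a b : ℝ, a ≠ b ∧ μ {ω | X ω = a} ≠ 0 ∧ μ {ω | X ω = b} ≠ 0 ∧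
      ∀ᵐ ω ∂μ, X ω = a ∨ X ω = b)
    (heq : (∫ ω, X ω ^ 4 ∂μ) / (∫ ω, X ω ^ 2 ∂μ) ^ 2
      - (3 / 4) * (∫ ω, X ω ^ 3 ∂μ) ^ 2 / (∫ ω, X ω ^ 2 ∂μ) ^ 3
      = (∫ ω, X ω ^ 2 ∂μ) ^ (β / (2 - β)) / (∫ ω, |X ω| ^ β ∂μ) ^ (2 / (2 - β))) :
    ∫ ω, X ω ^ 3 ∂μ = 0 := by
  obtain ⟨a, b, hab, ha, hb, hae⟩ := hbern
  have hint (g : ℝ → ℝ) := integral_comp_of_ae_eq_or_eq h1.aemeasurable hab hae g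
  have hpq : μ.real {ω | X ω = a} + μ.real {ω | X ω = b} = 1 := by
    simpa using (hint fun _ => 1).symm
  rw [hint fun t => t] at hmean
  rw [hint (· ^ 2), hint (· ^ 3), hint (· ^ 4), hint (|·| ^ β)] at heq
  rw [hint (· ^ 3)]
  exact two_point_third_moment_eq_zero (ENNReal.toReal_pos ha (measure_ne_top μ _))
    (ENNReal.toReal_pos hb (measure_ne_top μ _)) hpq hab hmean hβ.2 heq

theorem symmetric_bernoulli_of_equality {Ω : Type*} [MeasurableSpace Ω] (μ : Measure Ω)
    [IsProbabilityMeasure μ] (X : Ω → ℝ) (β : ℝ) (hβ : β ∈ Set.Ico (0:ℝ) 1)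
    (h1 : Integrable X μ) (h2 : Integrable (fun ω => X ω ^ 2) μ)
    (h3 : Integrable (fun ω => X ω ^ 3) μ) (h4 : Integrable (fun ω => X ω ^ 4) μ)
    (hβint : Integrable (fun ω => |X ω| ^ β) μ)
    (hmean : ∫ ω, X ω ∂μ = 0) (hvar : 0 < ∫ ω, X ω ^ 2 ∂μ)
    (hbern : ∃ a b : ℝ, a ≠ b ∧ μ {ω | X ω = a} ≠ 0 ∧ μ {ω | X ω = b} ≠ 0 ∧
      ∀ᵐ ω ∂μ, X ω = a ∨ X ω = b)
    (heq : (∫ ω, X ω ^ 4 ∂μ) / (∫ ω, X ω ^ 2 ∂μ) ^ 2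
      - (3 / 4) * (∫ ω, X ω ^ 3 ∂μ) ^ 2 / (∫ ω, X ω ^ 2 ∂μ) ^ 3
      = (∫ ω, X ω ^ 2 ∂μ) ^ (β / (2 - β)) / (∫ ω, |X ω| ^ β ∂μ) ^ (2 / (2 - β))) :
    ∫ ω, X ω ^ 3 ∂μ = 0 :=
  symmetric_bernoulli_of_equality_general μ X β hβ h1 hmean hbern heq
end
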